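/- For any positive integer n and real number a with a+1+n ≠ 0 for the relevant indices, (a+2)^2 * S_n(a+2) - (a+1)^2 * S_n(a) = (a+2)(2a+3) * n/(4^{n-1}(a+1+n)) * C(2n-1,n-1)*C(a+1,n-1)*C(-3-a,n-1), where S_n(a) = Σ_{k=0}^{n-1} C(a,k)*C(-1-a,k)*C(2k,k)/4^k. -/

import Mathlib

/-!
Write `D_n(a) = (a+2)² S_n(a+2) - (a+1)² S_n(a)`. Telescoping in `n`, one checks that
`D_{n+1}(a) = (2a+3)(2n+1) C(2n,n)/4ⁿ · C(a+1,n) C(-2-a,n)`: once every binomial coefficient in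
the inductive step is written through `C(a,n-1)` and `C(-3-a,n-1)`, the step is a rational
identity. The stated form follows from `(a+2+n) C(-2-a,n) = (a+2) C(-3-a,n)`, which is where the
denominator `a+1+n` comes from.
-/

/-- Generalized binomial coefficient `C(x, k) = x(x-1)⋯(x-k+1)/k!` for real `x`. -/
noncomputable def gbc (x : ℝ) (k : ℕ) : ℝ :=
  (∏ i ∈ Finset.range k, (x - i)) / (Nat.factorial k)

/-- `S_n(a) = Σ_{k=0}^{n-1} C(a,k) C(-1-a,k) C(2k,k) / 4^k`. -/
noncomputable def S (a : ℝ) (n : ℕ) : ℝ :=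
  ∑ k ∈ Finset.range n, gbc a k * gbc (-1 - a) k * (Nat.choose (2 * k) k) / 4 ^ k

open Finset Nat

namespace gbc

@[simp]
lemma zero_right (x : ℝ) : gbc x 0 = 1 := by
  simp [gbc]

lemma succ_right (x : ℝ) (k : ℕ) : gbc x (k + 1) = gbc x k * (x - k) / (k + 1) := by
  simp only [gbc, prod_range_succ, factorial_succ, cast_mul, cast_add, cast_one]
  field_simp

lemma succ_right_eq_mul_sub_one (x : ℝ) (k : ℕ) :
    gbc x (k + 1) = x * gbc (x - 1) k / (k + 1) := by
  simp only [gbc, prod_range_succ', factorial_succ, cast_mul, cast_add, cast_one, cast_zero,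
    sub_zero]
  field_simp
  refine congrArg _ (prod_congr rfl fun i _ => ?_)
  ring

lemma add_one_mul_sub (x : ℝ) (k : ℕ) : gbc (x + 1) k * (x + 1 - k) = (x + 1) * gbc x k := by
  have h := succ_right (x + 1) k
  rw [succ_right_eq_mul_sub_one, add_sub_cancel_right] at h
  field_simp at h
  linarith

end gbc

noncomputable def summand (a : ℝ) (k : ℕ) : ℝ :=
  gbc a k * gbc (-1 - a) k * centralBinom k / 4 ^ k

lemma S_succ (a : ℝ) (n : ℕ) : S a (n + 1) = S a n + summand a n := by
  simp only [S, summand, centralBinom_eq_two_mul_choose, sum_range_succ]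

noncomputable def closedDiff (a : ℝ) (n : ℕ) : ℝ :=
  (2 * a + 3) * (2 * n + 1) * centralBinom n / 4 ^ n * gbc (a + 1) n * gbc (-2 - a) n

lemma closedDiff_add_summand (a : ℝ) (n : ℕ) :
    closedDiff a n + ((a + 2) ^ 2 * summand (a + 2) (n + 1) - (a + 1) ^ 2 * summand a (n + 1)) =
      closedDiff a (n + 1) := by
  cases n with
  | zero =>
    simp [closedDiff, summand, gbc.succ_right, centralBinom, Nat.choose]
    ring
  | succ m =>
    have hA : gbc (a + 1) (m + 1) = (a + 1) * gbc a m / (m + 1) := by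
      rw [gbc.succ_right_eq_mul_sub_one, add_sub_cancel_right]
    have hA' : gbc (a + 1) (m + 2) = (a + 1) * gbc a (m + 1) / (m + 2) := by
      rw [gbc.succ_right_eq_mul_sub_one, add_sub_cancel_right]; push_cast; ring
    have hB : gbc (-2 - a) (m + 1) = (-2 - a) * gbc (-3 - a) m / (m + 1) := by
      rw [gbc.succ_right_eq_mul_sub_one, show -2 - a - 1 = -3 - a by ring]
    have hB' : gbc (-2 - a) (m + 2) = (-2 - a) * gbc (-3 - a) (m + 1) / (m + 2) := by
      rw [gbc.succ_right_eq_mul_sub_one, show -2 - a - 1 = -3 - a by ring]; push_cast; ring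
    have hC : gbc (a + 2) (m + 2) = (a + 2) * gbc (a + 1) (m + 1) / (m + 2) := by
      rw [gbc.succ_right_eq_mul_sub_one, show a + 2 - 1 = a + 1 by ring]; push_cast; ring
    have hD : gbc (-1 - a) (m + 2) = (-1 - a) * gbc (-2 - a) (m + 1) / (m + 2) := by
      rw [gbc.succ_right_eq_mul_sub_one, show -1 - a - 1 = -2 - a by ring]; push_cast; ring
    have hE : (centralBinom (m + 2) : ℝ) = 2 * (2 * m + 3) * centralBinom (m + 1) / (m + 2) := by
      have := succ_mul_centralBinom_succ (m + 1)
      rw [eq_div_iff (by positivity)]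
      exact_mod_cast (mul_comm _ _).trans this
    simp only [closedDiff, summand, show -1 - (a + 2) = -3 - a by ring]
    rw [hA', hB', hC, hD, hE, hA, hB, gbc.succ_right a (m + 1), gbc.succ_right (-3 - a) (m + 1),
      gbc.succ_right a m, gbc.succ_right (-3 - a) m]
    push_cast
    field_simp
    ring

theorem sq_mul_S_sub_sq_mul_S (a : ℝ) (n : ℕ) :
    (a + 2) ^ 2 * S (a + 2) (n + 1) - (a + 1) ^ 2 * S a (n + 1) = closedDiff a n := by
  induction n with
  | zero => simp [S, closedDiff]; ring
  | succ n ih =>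
    rw [← closedDiff_add_summand, ← ih, S_succ (a + 2) (n + 1), S_succ a (n + 1)]
    ring

theorem stmt1 (n : ℕ) (hn : 0 < n) (a : ℝ) (h : a + 1 + n ≠ 0) :
    (a + 2) ^ 2 * S (a + 2) n - (a + 1) ^ 2 * S a n =
      (a + 2) * (2 * a + 3) * n / (4 ^ (n - 1) * (a + 1 + n)) *
        (Nat.choose (2 * n - 1) (n - 1)) * gbc (a + 1) (n - 1) * gbc (-3 - a) (n - 1) := by
  obtain ⟨m, rfl⟩ : ∃ m, n = m + 1 := ⟨n - 1, by omega⟩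
  have hchoose : ((m + 1) * (2 * m + 1).choose m : ℝ) = (2 * m + 1) * centralBinom m := by
    rw [centralBinom_eq_two_mul_choose, ← choose_symm_half]
    exact_mod_cast (mul_comm _ _).trans (add_one_mul_choose_eq (2 * m) m).symm
  have hgbc : (a + 2 + m) * gbc (-2 - a) m = (a + 2) * gbc (-3 - a) m := by
    have := gbc.add_one_mul_sub (-3 - a) m
    rw [show -3 - a + 1 = -2 - a by ring] at this
    linarith
  have ha : a + 2 + m ≠ 0 := by push_cast at h; contrapose! h; linarith
  rw [show 2 * (m + 1) - 1 = 2 * m + 1 by omega, Nat.add_sub_cancel, sq_mul_S_sub_sq_mul_S,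
    closedDiff]
  field_simp
  push_cast
  linear_combination (2 * a + 3) * gbc (a + 1) m * ((2 * m + 1) * centralBinom m * hgbc -
    (a + 2) * gbc (-3 - a) m * hchoose)
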